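/- Under the k-fold convolution of the biased riffle shuffle measure P_{n,a,p}, the expected number of inversions of a random permutation equals (1/2)·C(n,2)·(1 − (p_1² + ... + p_a²)^k). -/

import Mathlib

/-- The biased riffle shuffle measure on `S_n` for a probability vector `p` indexed by
a linearly ordered alphabet `α`, via the inverse description: each card is independently
assigned a letter (letter `c` with probability `p c`), the cards are stably sorted by
letter (`Tuple.sort`), and the shuffle is the inverse of the resulting rearrangement. -/
noncomputable def shuffleP (n : ℕ) {α : Type*} [Fintype α] [LinearOrder α]
    (p : α → ℝ) (π : Equiv.Perm (Fin n)) : ℝ :=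
  ∑ f ∈ Finset.univ.filter (fun f : Fin n → α => (Tuple.sort f)⁻¹ = π), ∏ i, p (f i)

/-- The `k`-fold convolution of a probability assignment `P` on `S_n`. -/
noncomputable def convPow (n : ℕ) (P : Equiv.Perm (Fin n) → ℝ) :
    ℕ → Equiv.Perm (Fin n) → ℝ
  | 0 => fun π => if π = 1 then 1 else 0
  | k + 1 => fun π => ∑ σ : Equiv.Perm (Fin n), P σ * convPow n P k (σ⁻¹ * π)

/-- The number of inversions of `π`: the number of pairs `i < j` with `π(i) > π(j)`. -/
def invCount (n : ℕ) (π : Equiv.Perm (Fin n)) : ℕ :=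
  ((Finset.univ ×ˢ Finset.univ).filter
    fun q : Fin n × Fin n => q.1 < q.2 ∧ π q.2 < π q.1).card

set_option linter.unusedSectionVars false

section aux

variable {n : ℕ} {α : Type*} [Fintype α] [LinearOrder α] (p : α → ℝ)

private lemma sum_fun_prod' {ι : Type*} [Fintype ι] [DecidableEq ι]
    (hs : ∑ c, p c = 1) : ∑ g : ι → α, ∏ i, p (g i) = 1 := by
  classical
  rw [← Fintype.piFinset_univ, ← Finset.prod_univ_sum]
  simp [hs]

private lemma sum_pair_split (hs : ∑ c, p c = 1) {u v : Fin n} (huv : u ≠ v)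
    (φ : α → α → ℝ) :
    ∑ f : Fin n → α, (∏ i, p (f i)) * φ (f u) (f v) = ∑ c, ∑ d, p c * p d * φ c d := by
  classical
  let e : α × α × ({i : Fin n // i ≠ u ∧ i ≠ v} → α) ≃ (Fin n → α) :=
    { toFun := fun x i => if h : i = u then x.1 else if h' : i = v then x.2.1 else x.2.2 ⟨i, h, h'⟩
      invFun := fun f => (f u, f v, fun i => f i.1)
      left_inv := by
        rintro ⟨c, d, g⟩
        refine Prod.ext ?_ (Prod.ext ?_ ?_) <;> simp [huv.symm]
        funext i
        rcases i with ⟨i, h1, h2⟩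
        simp [h1, h2]
      right_inv := fun f => by
        funext i
        by_cases h : i = u
        · simp [h]
        · by_cases h' : i = v <;> simp [h, h', huv.symm] }
  have he_u : ∀ x, e x u = x.1 := fun x => by simp [e]
  have he_v : ∀ x, e x v = x.2.1 := fun x => by simp [e, huv.symm]
  have hprod : ∀ x, (∏ i, p (e x i))
      = p x.1 * (p x.2.1 * ∏ i : {i : Fin n // i ≠ u ∧ i ≠ v}, p (x.2.2 i)) := by
    rintro ⟨c, d, g⟩
    rw [← Finset.mul_prod_erase Finset.univ _ (Finset.mem_univ u),
      ← Finset.mul_prod_erase _ _ (Finset.mem_erase.mpr ⟨Ne.symm huv, Finset.mem_univ v⟩),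
      Finset.prod_subtype ((Finset.univ.erase u).erase v)
        (p := fun i => i ≠ u ∧ i ≠ v) (fun i => by simp [and_comm]) (fun i => p (e (c, d, g) i))]
    rw [he_u, he_v]
    refine congrArg _ (congrArg _ (Finset.prod_congr rfl fun i _ => ?_))
    rcases i with ⟨i, h1, h2⟩
    simp [e, h1, h2]
  calc ∑ f : Fin n → α, (∏ i, p (f i)) * φ (f u) (f v)
      = ∑ x : α × α × ({i : Fin n // i ≠ u ∧ i ≠ v} → α),
          (∏ i, p (e x i)) * φ (e x u) (e x v) :=
        (Equiv.sum_comp e (fun f => (∏ i, p (f i)) * φ (f u) (f v))).symm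
    _ = ∑ c, ∑ d, ∑ g : {i : Fin n // i ≠ u ∧ i ≠ v} → α,
          (p c * (p d * ∏ i, p (g i))) * φ c d := by
        rw [Fintype.sum_prod_type]
        refine Finset.sum_congr rfl fun c _ => ?_
        rw [Fintype.sum_prod_type]
        refine Finset.sum_congr rfl fun d _ => Finset.sum_congr rfl fun g _ => ?_
        rw [hprod, he_u, he_v]
    _ = ∑ c, ∑ d, p c * p d * φ c d := by
        refine Finset.sum_congr rfl fun c _ => Finset.sum_congr rfl fun d _ => ?_
        have h1 : ∀ g : {i : Fin n // i ≠ u ∧ i ≠ v} → α,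
            (p c * (p d * ∏ i, p (g i))) * φ c d = (p c * p d * φ c d) * ∏ i, p (g i) :=
          fun g => by ring
        simp_rw [h1, ← Finset.mul_sum, sum_fun_prod' p hs, mul_one]

private lemma shuffleP_total (hs : ∑ c, p c = 1) :
    ∑ σ : Equiv.Perm (Fin n), shuffleP n p σ = 1 := by
  classical
  unfold shuffleP
  rw [Finset.sum_fiberwise Finset.univ (fun f : Fin n → α => (Tuple.sort f)⁻¹)
    (fun f => ∏ i, p (f i))]
  exact sum_fun_prod' p hs

private lemma sort_inv_lt (f : Fin n → α) {u v : Fin n} (huv : u < v) :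
    (Tuple.sort f)⁻¹ v < (Tuple.sort f)⁻¹ u ↔ f v < f u := by
  obtain ⟨hmono, htie⟩ := (Tuple.eq_sort_iff).mp (rfl : Tuple.sort f = Tuple.sort f)
  set σ := Tuple.sort f with hσ
  constructor
  · intro h
    have h1 : f (σ ((σ⁻¹) v)) ≤ f (σ ((σ⁻¹) u)) := hmono h.le
    simp only [Equiv.Perm.inv_def, Equiv.apply_symm_apply] at h1
    rcases h1.lt_or_eq with h2 | h2
    · exact h2
    · have := htie _ _ h (by simp [h2])
      simp only [Equiv.Perm.inv_def, Equiv.apply_symm_apply] at this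
      exact absurd this (asymm huv)
  · intro h
    rcases lt_trichotomy ((σ⁻¹) v) ((σ⁻¹) u) with h1 | h1 | h1
    · exact h1
    · exact absurd (σ⁻¹.injective h1) huv.ne'
    · have h2 : f (σ ((σ⁻¹) u)) ≤ f (σ ((σ⁻¹) v)) := hmono h1.le
      simp only [Equiv.Perm.inv_def, Equiv.apply_symm_apply] at h2
      exact absurd h2 (not_le.mpr h)

private lemma pair_alg (hs : ∑ c, p c = 1) :
    ∑ c, ∑ d, p c * p d * (if d < c then (1:ℝ) else 0) = (1 - ∑ c, p c ^ 2) / 2 := by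
  classical
  set S1 := ∑ c, ∑ d, p c * p d * (if d < c then (1:ℝ) else 0) with hS1
  set S2 := ∑ c, ∑ d, p c * p d * (if c < d then (1:ℝ) else 0) with hS2
  set S3 := ∑ c, ∑ d, p c * p d * (if c = d then (1:ℝ) else 0) with hS3
  have h12 : S1 = S2 := by
    rw [hS1, Finset.sum_comm]
    exact Finset.sum_congr rfl fun c _ => Finset.sum_congr rfl fun d _ => by ring
  have h3 : S3 = ∑ c, p c ^ 2 := by
    rw [hS3]
    refine Finset.sum_congr rfl fun c _ => ?_
    simp [mul_ite, Finset.sum_ite_eq, sq]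
  have htot : S1 + S2 + S3 = 1 := by
    rw [hS1, hS2, hS3]
    simp_rw [← Finset.sum_add_distrib]
    have key : ∀ c d : α, (p c * p d * (if d < c then (1:ℝ) else 0)
        + p c * p d * (if c < d then (1:ℝ) else 0))
        + p c * p d * (if c = d then (1:ℝ) else 0) = p c * p d := by
      intro c d
      rcases lt_trichotomy c d with h | h | h
      · simp [h, asymm h, h.ne]
      · simp [h]
      · simp [h, asymm h, h.ne']
    calc ∑ c, ∑ d, ((p c * p d * (if d < c then (1:ℝ) else 0)
            + p c * p d * (if c < d then (1:ℝ) else 0))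
            + p c * p d * (if c = d then (1:ℝ) else 0))
        = ∑ c, ∑ d, p c * p d :=
          Finset.sum_congr rfl fun c _ => Finset.sum_congr rfl fun d _ => key c d
      _ = 1 := by simp_rw [← Finset.mul_sum, hs, mul_one, hs]
  linarith

private lemma shuffle_pair (hs : ∑ c, p c = 1) {u v : Fin n} (huv : u < v) :
    ∑ σ : Equiv.Perm (Fin n), shuffleP n p σ * (if σ v < σ u then (1:ℝ) else 0)
      = (1 - ∑ c, p c ^ 2) / 2 := by
  classical
  have step1 : ∑ σ : Equiv.Perm (Fin n), shuffleP n p σ * (if σ v < σ u then (1:ℝ) else 0)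
      = ∑ f : Fin n → α, (∏ i, p (f i)) * (if f v < f u then (1:ℝ) else 0) := by
    unfold shuffleP
    rw [← Finset.sum_fiberwise Finset.univ (fun f : Fin n → α => (Tuple.sort f)⁻¹)
      (fun f => (∏ i, p (f i)) * (if f v < f u then (1:ℝ) else 0))]
    refine Finset.sum_congr rfl fun σ _ => ?_
    rw [Finset.sum_mul]
    refine Finset.sum_congr rfl fun f hf => ?_
    have hσ : (Tuple.sort f)⁻¹ = σ := (Finset.mem_filter.mp hf).2
    have hiff : (f v < f u) ↔ (σ v < σ u) := by rw [← hσ]; exact (sort_inv_lt f huv).symm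
    simp only [hiff]
  rw [step1, sum_pair_split p hs huv.ne (fun c d => if d < c then (1:ℝ) else 0),
    pair_alg p hs]

end aux

section conv

variable {n a : ℕ} (p : Fin a → ℝ)

private lemma convPow_sum (hs : ∑ c, p c = 1) (k : ℕ) :
    ∑ π : Equiv.Perm (Fin n), convPow n (shuffleP n p) k π = 1 := by
  classical
  induction k with
  | zero => simp [convPow]
  | succ k ih =>
    simp only [convPow]
    rw [Finset.sum_comm]
    have key : ∀ σ : Equiv.Perm (Fin n),
        ∑ π : Equiv.Perm (Fin n), shuffleP n p σ * convPow n (shuffleP n p) k (σ⁻¹ * π)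
          = shuffleP n p σ := by
      intro σ
      rw [← Finset.mul_sum,
        ← Equiv.sum_comp (Equiv.mulLeft σ) (fun π => convPow n (shuffleP n p) k (σ⁻¹ * π))]
      simp only [Equiv.coe_mulLeft, inv_mul_cancel_left]
      rw [ih, mul_one]
    rw [Finset.sum_congr rfl fun σ _ => key σ, shuffleP_total p hs]

private lemma pair_prob (hs : ∑ c, p c = 1) (k : ℕ) {i j : Fin n} (hij : i < j) :
    ∑ π : Equiv.Perm (Fin n),
        convPow n (shuffleP n p) k π * (if π j < π i then (1:ℝ) else 0)
      = (1 - (∑ c, p c ^ 2) ^ k) / 2 := by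
  classical
  induction k with
  | zero =>
    rw [Finset.sum_eq_single 1]
    · simp [convPow, asymm hij]
    · intro b _ hb; simp [convPow, hb]
    · simp
  | succ k ih =>
    simp only [convPow]
    simp_rw [Finset.sum_mul]
    rw [Finset.sum_comm]
    have hinner : ∀ σ : Equiv.Perm (Fin n),
        ∑ π : Equiv.Perm (Fin n),
            (shuffleP n p σ * convPow n (shuffleP n p) k (σ⁻¹ * π))
              * (if π j < π i then (1:ℝ) else 0)
          = ∑ τ : Equiv.Perm (Fin n),
            (shuffleP n p σ * convPow n (shuffleP n p) k τ)
              * (if σ (τ j) < σ (τ i) then (1:ℝ) else 0) := by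
      intro σ
      rw [← Equiv.sum_comp (Equiv.mulLeft σ)
        (fun π => (shuffleP n p σ * convPow n (shuffleP n p) k (σ⁻¹ * π))
          * (if π j < π i then (1:ℝ) else 0))]
      refine Finset.sum_congr rfl fun τ _ => ?_
      simp only [Equiv.coe_mulLeft, inv_mul_cancel_left, Equiv.Perm.mul_apply]
      congr
    rw [Finset.sum_congr rfl fun σ _ => hinner σ, Finset.sum_comm]
    have houter : ∀ τ : Equiv.Perm (Fin n),
        ∑ σ : Equiv.Perm (Fin n),
            (shuffleP n p σ * convPow n (shuffleP n p) k τ)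
              * (if σ (τ j) < σ (τ i) then (1:ℝ) else 0)
          = convPow n (shuffleP n p) k τ *
              ((1 - ∑ c, p c ^ 2) / 2
                + (∑ c, p c ^ 2) * (if τ j < τ i then (1:ℝ) else 0)) := by
      intro τ
      have hne : τ i ≠ τ j := fun h => hij.ne (τ.injective h)
      have hfact : ∑ σ : Equiv.Perm (Fin n),
          (shuffleP n p σ * convPow n (shuffleP n p) k τ)
            * (if σ (τ j) < σ (τ i) then (1:ℝ) else 0)
          = convPow n (shuffleP n p) k τ * ∑ σ : Equiv.Perm (Fin n),
              shuffleP n p σ * (if σ (τ j) < σ (τ i) then (1:ℝ) else 0) := by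
        rw [Finset.mul_sum]
        exact Finset.sum_congr rfl fun σ _ => by ring
      rcases hne.lt_or_gt with hlt | hlt
      · rw [hfact, shuffle_pair p hs hlt]
        simp [asymm hlt]
      · have hflip : ∀ σ : Equiv.Perm (Fin n),
            shuffleP n p σ * (if σ (τ j) < σ (τ i) then (1:ℝ) else 0)
            = shuffleP n p σ - shuffleP n p σ * (if σ (τ i) < σ (τ j) then (1:ℝ) else 0) := by
          intro σ
          have hne2 : σ (τ j) ≠ σ (τ i) := fun h => hne (σ.injective h).symm
          rcases hne2.lt_or_gt with h | h
          · simp [h, asymm h]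
          · simp [h, asymm h]
        rw [hfact]
        simp_rw [hflip]
        rw [Finset.sum_sub_distrib, shuffleP_total p hs, shuffle_pair p hs hlt]
        simp only [hlt, if_pos]
        ring
    rw [Finset.sum_congr rfl fun τ _ => houter τ]
    have hsplit : ∀ τ : Equiv.Perm (Fin n),
        convPow n (shuffleP n p) k τ *
            ((1 - ∑ c, p c ^ 2) / 2
              + (∑ c, p c ^ 2) * (if τ j < τ i then (1:ℝ) else 0))
        = (1 - ∑ c, p c ^ 2) / 2 * convPow n (shuffleP n p) k τ
          + (∑ c, p c ^ 2) *
              (convPow n (shuffleP n p) k τ * (if τ j < τ i then (1:ℝ) else 0)) :=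
      fun τ => by ring
    simp_rw [hsplit]
    rw [Finset.sum_add_distrib, ← Finset.mul_sum, ← Finset.mul_sum,
      convPow_sum p hs k, ih]
    ring

end conv

private lemma card_lt_pairs (n : ℕ) :
    ((Finset.univ ×ˢ Finset.univ).filter fun q : Fin n × Fin n => q.1 < q.2).card
      = n.choose 2 := by
  classical
  set A := ((Finset.univ ×ˢ Finset.univ).filter fun q : Fin n × Fin n => q.1 < q.2) with hA
  set B := ((Finset.univ ×ˢ Finset.univ).filter fun q : Fin n × Fin n => q.2 < q.1) with hB
  have hAB : A.card = B.card := by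
    apply Finset.card_bij (fun q _ => Prod.swap q)
    · intro q hq
      simp only [hA, hB, Finset.mem_filter, Finset.mem_product, Finset.mem_univ,
        true_and, and_true] at hq ⊢
      simpa using hq
    · intro q1 h1 q2 h2 h
      exact Prod.swap_injective h
    · intro q hq
      refine ⟨Prod.swap q, ?_, by simp⟩
      simp only [hA, hB, Finset.mem_filter, Finset.mem_product, Finset.mem_univ,
        true_and, and_true] at hq ⊢
      simpa using hq
  have h1 : (Finset.univ : Finset (Fin n)).offDiag.filter (fun q => q.1 < q.2) = A := by
    ext q
    simp only [hA, Finset.mem_filter, Finset.mem_offDiag, Finset.mem_product,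
      Finset.mem_univ, true_and]
    exact ⟨And.right, fun h => ⟨h.ne, h⟩⟩
  have h2 : (Finset.univ : Finset (Fin n)).offDiag.filter (fun q => ¬ q.1 < q.2) = B := by
    ext q
    simp only [hB, Finset.mem_filter, Finset.mem_offDiag, Finset.mem_product,
      Finset.mem_univ, true_and, not_lt]
    exact ⟨fun h => h.2.lt_of_ne fun e => h.1 e.symm, fun h => ⟨h.ne', h.le⟩⟩
  have h3 := Finset.card_filter_add_card_filter_not
    (s := (Finset.univ : Finset (Fin n)).offDiag) (p := fun q => q.1 < q.2)
  rw [h1, h2] at h3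
  have h4 : (Finset.univ : Finset (Fin n)).offDiag.card = n * n - n := by
    rw [Finset.offDiag_card]
    simp
  rw [h4, ← hAB] at h3
  have h5 : n.choose 2 = n * (n - 1) / 2 := Nat.choose_two_right n
  have h6 : n * (n - 1) = n * n - n := by
    cases n with
    | zero => simp
    | succ m =>
      have : (m + 1) * (m + 1) = (m + 1) * m + (m + 1) := by ring
      simp [this]
  rw [h5, h6]
  omega

/-- Under the `k`-fold convolution of the biased riffle shuffle `P_{n,a,p}`, the
expected number of inversions is `(1/2) C(n,2) (1 − (p₁² + ⋯ + p_a²)^k)`. -/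
theorem stmt10 (n a k : ℕ) (p : Fin a → ℝ) (hp : ∀ i, 0 ≤ p i) (hs : ∑ i, p i = 1) :
    ∑ π : Equiv.Perm (Fin n),
        convPow n (shuffleP n p) k π * (invCount n π : ℝ) =
      (1 / 2) * (n.choose 2 : ℝ) * (1 - (∑ i, p i ^ 2) ^ k) := by
  classical
  have hinv : ∀ π : Equiv.Perm (Fin n), (invCount n π : ℝ)
      = ∑ q ∈ (Finset.univ ×ˢ Finset.univ).filter (fun q : Fin n × Fin n => q.1 < q.2),
          (if π q.2 < π q.1 then (1:ℝ) else 0) := by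
    intro π
    unfold invCount
    rw [← Finset.filter_filter, Finset.card_filter]
    push_cast
    rfl
  calc ∑ π : Equiv.Perm (Fin n), convPow n (shuffleP n p) k π * (invCount n π : ℝ)
      = ∑ π : Equiv.Perm (Fin n),
          ∑ q ∈ (Finset.univ ×ˢ Finset.univ).filter (fun q : Fin n × Fin n => q.1 < q.2),
            convPow n (shuffleP n p) k π * (if π q.2 < π q.1 then (1:ℝ) else 0) := by
        refine Finset.sum_congr rfl fun π _ => ?_
        rw [hinv π, Finset.mul_sum]
    _ = ∑ q ∈ (Finset.univ ×ˢ Finset.univ).filter (fun q : Fin n × Fin n => q.1 < q.2),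
          ∑ π : Equiv.Perm (Fin n),
            convPow n (shuffleP n p) k π * (if π q.2 < π q.1 then (1:ℝ) else 0) :=
        Finset.sum_comm
    _ = ∑ q ∈ (Finset.univ ×ˢ Finset.univ).filter (fun q : Fin n × Fin n => q.1 < q.2),
          (1 - (∑ c, p c ^ 2) ^ k) / 2 := by
        refine Finset.sum_congr rfl fun q hq => ?_
        have hlt : q.1 < q.2 := (Finset.mem_filter.mp hq).2
        exact pair_prob p hs k hlt
    _ = (1 / 2) * (n.choose 2 : ℝ) * (1 - (∑ i, p i ^ 2) ^ k) := by
        rw [Finset.sum_const, card_lt_pairs n, nsmul_eq_mul]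
        ring
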